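/- arXiv:2310.07865 — 11 statements merged into one kernel-verified Lean document; each statement's English description precedes it below -/
import Mathlib

section
/- Stabilizer upper bound on the cost of MEV: if f is normalized at x, then C(f, x) ≤ 1 − |F(x)| / n!. -/
/-- The action of a permutation `π` on a list of transactions `x : Fin n → A`:
`(π · x) i = x (π⁻¹ i)`. -/
def permAct {n : ℕ} {A : Type*} (π : Equiv.Perm (Fin n)) (x : Fin n → A) : Fin n → A :=
  fun i => x (π⁻¹ i)

/-- The cost of MEV: `C(f, x) = max_{π ∈ S} f(π·x) - (∑_{π ∈ S} f(π·x)) / n!`. -/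
noncomputable def mevCost {n : ℕ} {A : Type*} (f : (Fin n → A) → ℝ) (x : Fin n → A) : ℝ :=
  (Finset.univ.sup' Finset.univ_nonempty fun π : Equiv.Perm (Fin n) => f (permAct π x)) -
    (∑ π : Equiv.Perm (Fin n), f (permAct π x)) / (Nat.factorial n : ℝ)

open scoped Classical in
/-- The stabilizer `F(x) = {π ∈ S | π·x = x}` as a finset. -/
noncomputable def stab {n : ℕ} {A : Type*} (x : Fin n → A) : Finset (Equiv.Perm (Fin n)) :=
  Finset.univ.filter fun π => permAct π x = x

lemma permAct_mul {n : ℕ} {A : Type*} (π σ : Equiv.Perm (Fin n)) (x : Fin n → A) :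
    permAct (π * σ) x = permAct π (permAct σ x) := by
  funext i
  simp [permAct]

/-- Stabilizer upper bound on the cost of MEV for normalized value functions:
`C(f, x) ≤ 1 - |F(x)| / n!`. -/
theorem mevCost_le_one_sub_stab {n : ℕ} {A : Type*} (hn : 1 ≤ n)
    (f : (Fin n → A) → ℝ) (x : Fin n → A)
    (hnonneg : ∀ π : Equiv.Perm (Fin n), 0 ≤ f (permAct π x))
    (hle : ∀ π : Equiv.Perm (Fin n), f (permAct π x) ≤ 1)
    (hmax : (Finset.univ.sup' Finset.univ_nonempty
      fun π : Equiv.Perm (Fin n) => f (permAct π x)) = 1) :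
    mevCost f x ≤ 1 - (stab x).card / (Nat.factorial n : ℝ) := by
  classical
  obtain ⟨π₀, -, hπ₀⟩ := Finset.exists_mem_eq_sup' (Finset.univ_nonempty)
    (fun π : Equiv.Perm (Fin n) => f (permAct π x))
  rw [hmax] at hπ₀
  set T : Finset (Equiv.Perm (Fin n)) := (stab x).image (fun σ => π₀ * σ) with hT
  have hcardT : T.card = (stab x).card :=
    Finset.card_image_of_injective _ (mul_right_injective π₀)
  have hfT : ∀ π ∈ T, f (permAct π x) = 1 := by
    intro π hπ
    obtain ⟨σ, hσ, rfl⟩ := Finset.mem_image.mp hπ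
    have hσx : permAct σ x = x := (Finset.mem_filter.mp hσ).2
    rw [permAct_mul, hσx, ← hπ₀]
  have hsum : ((stab x).card : ℝ) ≤ ∑ π : Equiv.Perm (Fin n), f (permAct π x) := by
    calc ((stab x).card : ℝ) = ∑ π ∈ T, f (permAct π x) := by
          rw [Finset.sum_congr rfl hfT, Finset.sum_const, nsmul_eq_mul, mul_one, hcardT]
      _ ≤ ∑ π : Equiv.Perm (Fin n), f (permAct π x) :=
          Finset.sum_le_sum_of_subset_of_nonneg (Finset.subset_univ T)
            (fun π _ _ => hnonneg π)
  have hfac : (0 : ℝ) < (Nat.factorial n : ℝ) := by positivity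
  unfold mevCost
  rw [hmax]
  have h := div_le_div_of_nonneg_right (c := (Nat.factorial n : ℝ)) hsum hfac.le
  linarith
end

section
/- Scaled stabilizer bound: if f is nonnegative on the orbit of x, i.e. f(π·x) ≥ 0 for every π ∈ S, then C(f, x) ≤ (max over π ∈ S of f(π·x)) · (1 − |F(x)| / n!). -/
/-- Scaled stabilizer bound: for `f` nonnegative on the orbit of `x`,
`C(f, x) ≤ (max_π f(π·x)) · (1 - |F(x)| / n!)`. -/
theorem mevCost_le_max_mul_one_sub_stab {n : ℕ} {A : Type*} (hn : 1 ≤ n)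
    (f : (Fin n → A) → ℝ) (x : Fin n → A)
    (hnonneg : ∀ π : Equiv.Perm (Fin n), 0 ≤ f (permAct π x)) :
    mevCost f x ≤
      (Finset.univ.sup' Finset.univ_nonempty
        fun π : Equiv.Perm (Fin n) => f (permAct π x)) *
        (1 - (stab x).card / (Nat.factorial n : ℝ)) := by
  classical
  set M := Finset.univ.sup' Finset.univ_nonempty
      fun π : Equiv.Perm (Fin n) => f (permAct π x) with hM
  obtain ⟨π₀, -, hπ₀⟩ := Finset.exists_mem_eq_sup' Finset.univ_nonempty
      fun π : Equiv.Perm (Fin n) => f (permAct π x)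
  have key : ((stab x).card : ℝ) * M ≤ ∑ π : Equiv.Perm (Fin n), f (permAct π x) := by
    have hinj : ∀ a ∈ stab x, ∀ b ∈ stab x, π₀ * a = π₀ * b → a = b := by
      intro a _ b _ h
      exact mul_left_cancel h
    have heq : ((stab x).card : ℝ) * M
        = ∑ π ∈ (stab x).image (fun σ => π₀ * σ), f (permAct π x) := by
      rw [Finset.sum_image hinj]
      have : ∀ σ ∈ stab x, f (permAct (π₀ * σ) x) = M := by
        intro σ hσ
        have hσx : permAct σ x = x := by
          simpa [stab] using hσ
        rw [permAct_mul, hσx]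
        exact hπ₀.symm.trans hM.symm
      rw [Finset.sum_congr rfl this, Finset.sum_const, nsmul_eq_mul]
    rw [heq]
    exact Finset.sum_le_sum_of_subset_of_nonneg (Finset.subset_univ _)
      (fun π _ _ => hnonneg π)
  have hfac : (0 : ℝ) < (Nat.factorial n : ℝ) := by
    exact_mod_cast Nat.factorial_pos n
  have hdiv : ((stab x).card : ℝ) * M / (Nat.factorial n : ℝ)
      ≤ (∑ π : Equiv.Perm (Fin n), f (permAct π x)) / (Nat.factorial n : ℝ) :=
    by gcongr
  have : mevCost f x ≤ M - ((stab x).card : ℝ) * M / (Nat.factorial n : ℝ) := by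
    unfold mevCost
    rw [← hM]
    linarith
  calc mevCost f x ≤ M - ((stab x).card : ℝ) * M / (Nat.factorial n : ℝ) := this
    _ = M * (1 - (stab x).card / (Nat.factorial n : ℝ)) := by ring
end

section
/- Lower bound for unfair (spiky) functions: let f be a value function with f(π·x) ≤ 1 for all π ∈ S, let H be a finite set of permutations (H ⊆ S), and let 0 ≤ α ≤ β ≤ 1. If there exists π ∈ H with f(π·x) ≥ β and f(π·x) ≤ α for every π ∉ H, then C(f, x) ≥ β − α − (|H| / n!)·(1 − α). -/
/-- Lower bound for unfair (spiky) functions: if `f ≤ 1` on the orbit, `f(π·x) ≥ β` for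
some `π ∈ H`, and `f(π·x) ≤ α` outside `H`, with `0 ≤ α ≤ β ≤ 1`, then
`C(f, x) ≥ β - α - (|H|/n!)·(1 - α)`. -/
theorem mevCost_ge_of_spiky {n : ℕ} {A : Type*} (hn : 1 ≤ n)
    (f : (Fin n → A) → ℝ) (x : Fin n → A) (H : Finset (Equiv.Perm (Fin n)))
    (α β : ℝ) (hα : 0 ≤ α) (hαβ : α ≤ β) (hβ : β ≤ 1)
    (hle : ∀ π : Equiv.Perm (Fin n), f (permAct π x) ≤ 1)
    (hspike : ∃ π ∈ H, β ≤ f (permAct π x))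
    (hout : ∀ π : Equiv.Perm (Fin n), π ∉ H → f (permAct π x) ≤ α) :
    β - α - ((H.card : ℝ) / (Nat.factorial n : ℝ)) * (1 - α) ≤ mevCost f x := by
  obtain ⟨π0, hπ0H, hβ0⟩ := hspike
  have hcard : Fintype.card (Equiv.Perm (Fin n)) = Nat.factorial n := by
    simp [Fintype.card_perm]
  have hfac : (0 : ℝ) < (Nat.factorial n : ℝ) := by
    exact_mod_cast Nat.factorial_pos n
  have hHle : H.card ≤ Nat.factorial n := by
    calc H.card ≤ (Finset.univ : Finset (Equiv.Perm (Fin n))).card :=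
          Finset.card_le_card (Finset.subset_univ H)
      _ = Nat.factorial n := by rw [Finset.card_univ, hcard]
  -- max bound
  have hmax : β ≤ Finset.univ.sup' Finset.univ_nonempty
      fun π : Equiv.Perm (Fin n) => f (permAct π x) := by
    refine le_trans hβ0 ?_
    exact Finset.le_sup' (fun π : Equiv.Perm (Fin n) => f (permAct π x)) (Finset.mem_univ π0)
  -- sum bound
  have hsplit : (∑ π : Equiv.Perm (Fin n), f (permAct π x)) =
      (∑ π ∈ H, f (permAct π x)) + (∑ π ∈ Hᶜ, f (permAct π x)) :=
    (Finset.sum_add_sum_compl H _).symm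
  have hsum1 : (∑ π ∈ H, f (permAct π x)) ≤ (H.card : ℝ) * 1 := by
    calc (∑ π ∈ H, f (permAct π x)) ≤ ∑ π ∈ H, (1 : ℝ) :=
          Finset.sum_le_sum fun π _ => hle π
      _ = (H.card : ℝ) * 1 := by simp
  have hsum2 : (∑ π ∈ Hᶜ, f (permAct π x)) ≤ ((Nat.factorial n : ℝ) - H.card) * α := by
    have hcc : ((Hᶜ : Finset (Equiv.Perm (Fin n))).card : ℝ) =
        (Nat.factorial n : ℝ) - H.card := by
      rw [Finset.card_compl, hcard]
      push_cast [Nat.cast_sub hHle]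
      ring
    calc (∑ π ∈ Hᶜ, f (permAct π x)) ≤ ∑ π ∈ Hᶜ, α :=
          Finset.sum_le_sum fun π hπ => hout π (by simpa using hπ)
      _ = ((Hᶜ : Finset (Equiv.Perm (Fin n))).card : ℝ) * α := by simp [mul_comm]
      _ = ((Nat.factorial n : ℝ) - H.card) * α := by rw [hcc]
  have hsum : (∑ π : Equiv.Perm (Fin n), f (permAct π x)) ≤
      (H.card : ℝ) * 1 + ((Nat.factorial n : ℝ) - H.card) * α := by
    rw [hsplit]; exact add_le_add hsum1 hsum2
  unfold mevCost
  have hdiv : (∑ π : Equiv.Perm (Fin n), f (permAct π x)) / (Nat.factorial n : ℝ) ≤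
      ((H.card : ℝ) * 1 + ((Nat.factorial n : ℝ) - H.card) * α) / (Nat.factorial n : ℝ) :=
    div_le_div_of_nonneg_right hsum hfac.le
  have key : β - α - ((H.card : ℝ) / (Nat.factorial n : ℝ)) * (1 - α) =
      β - ((H.card : ℝ) * 1 + ((Nat.factorial n : ℝ) - H.card) * α) / (Nat.factorial n : ℝ) := by
    field_simp
    ring
  rw [key]
  exact sub_le_sub hmax hdiv
end

section
/- Partial converse (localization of high-cost functions): suppose f is normalized at x, α ∈ ℝ with C(f, x) ≥ α, η > 0, and T is a finite subset of the orbit S(x) such that f(π·x) ≥ η whenever π·x ∈ T. Then η · |F(x)| · |T| ≤ (1 − α) · n!. -/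
/-- Partial converse (localization of high-cost functions): if a normalized `f` has
cost at least `α`, `η > 0`, and `T` is a finite subset of the orbit `S(x)` with
`f(π·x) ≥ η` whenever `π·x ∈ T`, then `η·|F(x)|·|T| ≤ (1 - α)·n!`. -/
theorem localization_of_high_cost {n : ℕ} {A : Type*} (hn : 1 ≤ n)
    (f : (Fin n → A) → ℝ) (x : Fin n → A) (α η : ℝ)
    (hnonneg : ∀ π : Equiv.Perm (Fin n), 0 ≤ f (permAct π x))
    (hle : ∀ π : Equiv.Perm (Fin n), f (permAct π x) ≤ 1)
    (hmax : (Finset.univ.sup' Finset.univ_nonempty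
      fun π : Equiv.Perm (Fin n) => f (permAct π x)) = 1)
    (hcost : α ≤ mevCost f x) (hη : 0 < η)
    (T : Finset (Fin n → A))
    (hTorbit : ∀ y ∈ T, ∃ π : Equiv.Perm (Fin n), permAct π x = y)
    (hfT : ∀ π : Equiv.Perm (Fin n), permAct π x ∈ T → η ≤ f (permAct π x)) :
    η * (stab x).card * T.card ≤ (1 - α) * (Nat.factorial n : ℝ) := by
  classical
  have hfact : (0:ℝ) < (Nat.factorial n : ℝ) := by
    exact_mod_cast Nat.factorial_pos n
  have hmul : ∀ π σ : Equiv.Perm (Fin n), permAct (π * σ) x = permAct π (permAct σ x) := by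
    intro π σ; funext i; simp [permAct]
  set S := Finset.univ.filter (fun π : Equiv.Perm (Fin n) => permAct π x ∈ T) with hSdef
  -- card of S
  have hcardS : S.card = (stab x).card * T.card := by
    have h1 : S.card = ∑ y ∈ T, (S.filter (fun π => permAct π x = y)).card := by
      apply Finset.card_eq_sum_card_fiberwise
      intro π hπ
      simpa [hSdef] using hπ
    have h2 : ∀ y ∈ T, (S.filter (fun π => permAct π x = y)).card = (stab x).card := by
      intro y hy
      obtain ⟨σ, hσ⟩ := hTorbit y hy
      have heq : S.filter (fun π => permAct π x = y) = (stab x).image (fun τ => σ * τ) := by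
        ext π
        simp only [hSdef, Finset.mem_filter, Finset.mem_image, Finset.mem_univ, true_and,
          stab]
        constructor
        · rintro ⟨-, h⟩
          refine ⟨σ⁻¹ * π, ?_, by group⟩
          rw [hmul, h, ← hσ, ← hmul, inv_mul_cancel]
          funext i; simp [permAct]
        · rintro ⟨τ, hτ, rfl⟩
          rw [hmul, hτ, hσ]
          exact ⟨hy, rfl⟩
      rw [heq, Finset.card_image_of_injective _ (mul_right_injective σ)]
    rw [h1, Finset.sum_congr rfl h2, Finset.sum_const, smul_eq_mul, mul_comm]
  -- lower bound on sum
  have hlow : η * S.card ≤ ∑ π : Equiv.Perm (Fin n), f (permAct π x) := by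
    calc η * S.card = ∑ _π ∈ S, η := by rw [Finset.sum_const, nsmul_eq_mul, mul_comm]
    _ ≤ ∑ π ∈ S, f (permAct π x) := by
        apply Finset.sum_le_sum
        intro π hπ
        exact hfT π (by simpa [hSdef] using hπ)
    _ ≤ ∑ π : Equiv.Perm (Fin n), f (permAct π x) := by
        apply Finset.sum_le_sum_of_subset_of_nonneg (Finset.subset_univ _)
        intro π _ _; exact hnonneg π
  -- upper bound on sum from cost
  have hup : ∑ π : Equiv.Perm (Fin n), f (permAct π x) ≤ (1 - α) * (Nat.factorial n : ℝ) := by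
    have : α ≤ 1 - (∑ π : Equiv.Perm (Fin n), f (permAct π x)) / (Nat.factorial n : ℝ) := by
      rw [← hmax]; simpa [mevCost] using hcost
    have h' : (∑ π : Equiv.Perm (Fin n), f (permAct π x)) / (Nat.factorial n : ℝ) ≤ 1 - α := by
      linarith
    calc ∑ π : Equiv.Perm (Fin n), f (permAct π x)
        = (∑ π : Equiv.Perm (Fin n), f (permAct π x)) / (Nat.factorial n : ℝ)
          * (Nat.factorial n : ℝ) := by field_simp
      _ ≤ (1 - α) * (Nat.factorial n : ℝ) := by
          exact mul_le_mul_of_nonneg_right h' hfact.le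
  calc η * (stab x).card * T.card = η * S.card := by
        rw [hcardS]; push_cast; ring
    _ ≤ ∑ π : Equiv.Perm (Fin n), f (permAct π x) := hlow
    _ ≤ (1 - α) * (Nat.factorial n : ℝ) := hup
end

section
/- Symmetrization yields a perfectly fair function: for any value function f : (Fin n → A) → ℝ, define g : (Fin n → A) → ℝ by g(y) := (∑ over ω ∈ S of f(ω·y)) / n!. Then C(g, x) = 0 for every x : Fin n → A. -/
theorem permAct_permAct {n : ℕ} {A : Type*} (σ τ : Equiv.Perm (Fin n)) (x : Fin n → A) :
    permAct σ (permAct τ x) = permAct (σ * τ) x :=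
  rfl

theorem sum_permAct_permAct {n : ℕ} {A : Type*} {M : Type*} [AddCommMonoid M]
    (f : (Fin n → A) → M) (π : Equiv.Perm (Fin n)) (x : Fin n → A) :
    ∑ ω : Equiv.Perm (Fin n), f (permAct ω (permAct π x)) =
      ∑ ω : Equiv.Perm (Fin n), f (permAct ω x) := by
  simp only [permAct_permAct]
  exact Equiv.sum_comp (Equiv.mulRight π) fun ω => f (permAct ω x)

theorem mevCost_eq_zero_of_forall_permAct_eq {n : ℕ} {A : Type*} (g : (Fin n → A) → ℝ)
    (x : Fin n → A) (hg : ∀ π : Equiv.Perm (Fin n), g (permAct π x) = g x) :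
    mevCost g x = 0 := by
  have hfac : (Nat.factorial n : ℝ) ≠ 0 := by positivity
  unfold mevCost
  rw [Finset.sup'_congr _ rfl fun π _ => hg π, Finset.sup'_const,
    Finset.sum_congr rfl fun π _ => hg π, Finset.sum_const, Finset.card_univ,
    Fintype.card_perm, Fintype.card_fin, nsmul_eq_mul, mul_div_cancel_left₀ _ hfac, sub_self]

theorem mevCost_symmetrization_eq_zero_general {n : ℕ} {A : Type*}
    (f : (Fin n → A) → ℝ) (x : Fin n → A) :
    mevCost
      (fun y => (∑ ω : Equiv.Perm (Fin n), f (permAct ω y)) / (Nat.factorial n : ℝ))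
      x = 0 :=
  mevCost_eq_zero_of_forall_permAct_eq _ x fun π => by
    simp only [sum_permAct_permAct]

/-- Symmetrization yields a perfectly fair function: averaging the value function over
all permutations gives a function with zero cost of MEV at every `x`. -/
theorem mevCost_symmetrization_eq_zero {n : ℕ} {A : Type*} (hn : 1 ≤ n)
    (f : (Fin n → A) → ℝ) (x : Fin n → A) :
    mevCost
      (fun y => (∑ ω : Equiv.Perm (Fin n), f (permAct ω y)) / (Nat.factorial n : ℝ))
      x = 0 :=
  mevCost_symmetrization_eq_zero_general f x
end

section
/- Lipschitz smoothness of the cost of MEV: let d : (Fin n → A) → (Fin n → A) → ℝ be permutation independent, i.e. d(π·x, π·y) = d(x, y) for all π ∈ S and all x, y, and let L ≥ 0 with |f(x) − f(y)| ≤ L · d(x, y) for all x, y. Then |C(f, x) − C(f, y)| ≤ 2·L·d(x, y) for all x, y : Fin n → A. -/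
/-- Lipschitz smoothness of the cost of MEV: if `d` is permutation independent and `f`
is `L`-Lipschitz with respect to `d`, then `C(f, ·)` is `2L`-Lipschitz in `d`. -/
theorem mevCost_lipschitz {n : ℕ} {A : Type*} (hn : 1 ≤ n)
    (f : (Fin n → A) → ℝ) (d : (Fin n → A) → (Fin n → A) → ℝ) (L : ℝ) (hL : 0 ≤ L)
    (hd : ∀ (π : Equiv.Perm (Fin n)) (x y : Fin n → A),
      d (permAct π x) (permAct π y) = d x y)
    (hf : ∀ x y : Fin n → A, |f x - f y| ≤ L * d x y) :
    ∀ x y : Fin n → A, |mevCost f x - mevCost f y| ≤ 2 * L * d x y := by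
  intro x y
  set c := L * d x y with hc
  have hkey : ∀ π : Equiv.Perm (Fin n), |f (permAct π x) - f (permAct π y)| ≤ c := by
    intro π
    calc |f (permAct π x) - f (permAct π y)| ≤ L * d (permAct π x) (permAct π y) :=
          hf _ _
      _ = c := by rw [hd]
  have hc0 : 0 ≤ c := le_trans (abs_nonneg _) (hkey 1)
  set g := fun π : Equiv.Perm (Fin n) => f (permAct π x)
  set h := fun π : Equiv.Perm (Fin n) => f (permAct π y)
  -- sup part
  have hsup : ∀ (u v : Equiv.Perm (Fin n) → ℝ), (∀ π, u π ≤ v π + c) →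
      (Finset.univ.sup' Finset.univ_nonempty u) ≤ (Finset.univ.sup' Finset.univ_nonempty v) + c := by
    intro u v huv
    apply Finset.sup'_le
    intro π _
    exact le_trans (huv π) (by
      have := Finset.le_sup' v (Finset.mem_univ π)
      linarith)
  have hsup1 : |(Finset.univ.sup' Finset.univ_nonempty g) -
      (Finset.univ.sup' Finset.univ_nonempty h)| ≤ c := by
    rw [abs_sub_le_iff]
    constructor
    · have := hsup g h (fun π => by have := hkey π; rw [abs_sub_le_iff] at this; linarith)
      linarith
    · have := hsup h g (fun π => by have := hkey π; rw [abs_sub_le_iff] at this; linarith)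
      linarith
  -- sum part
  have hcard : (Finset.univ : Finset (Equiv.Perm (Fin n))).card = Nat.factorial n := by
    simp [Finset.card_univ, Fintype.card_perm]
  have hsum : |(∑ π : Equiv.Perm (Fin n), g π) - ∑ π : Equiv.Perm (Fin n), h π| ≤
      (Nat.factorial n : ℝ) * c := by
    rw [← Finset.sum_sub_distrib]
    calc |∑ π : Equiv.Perm (Fin n), (g π - h π)| ≤ ∑ π : Equiv.Perm (Fin n), |g π - h π| :=
          Finset.abs_sum_le_sum_abs _ _
      _ ≤ ∑ _π : Equiv.Perm (Fin n), c := Finset.sum_le_sum (fun π _ => hkey π)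
      _ = (Nat.factorial n : ℝ) * c := by rw [Finset.sum_const, hcard, nsmul_eq_mul]
  have hfac : (0 : ℝ) < (Nat.factorial n : ℝ) := by
    exact_mod_cast Nat.factorial_pos n
  have havg : |(∑ π : Equiv.Perm (Fin n), g π) / (Nat.factorial n : ℝ) -
      (∑ π : Equiv.Perm (Fin n), h π) / (Nat.factorial n : ℝ)| ≤ c := by
    rw [div_sub_div_same, abs_div, abs_of_pos hfac, div_le_iff₀ hfac]
    linarith [hsum]
  have : |mevCost f x - mevCost f y| ≤ c + c := by
    unfold mevCost
    calc |(Finset.univ.sup' Finset.univ_nonempty g - (∑ π : Equiv.Perm (Fin n), g π) / (Nat.factorial n : ℝ)) -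
        (Finset.univ.sup' Finset.univ_nonempty h - (∑ π : Equiv.Perm (Fin n), h π) / (Nat.factorial n : ℝ))|
        = |(Finset.univ.sup' Finset.univ_nonempty g - Finset.univ.sup' Finset.univ_nonempty h) -
          ((∑ π : Equiv.Perm (Fin n), g π) / (Nat.factorial n : ℝ) -
           (∑ π : Equiv.Perm (Fin n), h π) / (Nat.factorial n : ℝ))| := by ring_nf
      _ ≤ _ + _ := abs_sub _ _
      _ ≤ c + c := add_le_add hsup1 havg
  linarith [this]
end

section
/- Tightness of the smoothness bound: take A = ℝ, n ≥ 1, the value function f(x) := x 0 − ∑_{i ≠ 0} x i, and e : Fin n → ℝ the indicator of the first coordinate (e 0 = 1 and e i = 0 for i ≠ 0). Then C(f, e) = 2·(1 − 1/n) (and C(f, 0) = 0 for the zero vector 0). -/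
open Finset Equiv

namespace Equiv.Perm

theorem surjective_eval {α : Type*} [DecidableEq α] (a : α) :
    Function.Surjective fun π : Perm α => π a :=
  fun b => ⟨swap a b, swap_apply_left a b⟩

variable {α : Type*} [Fintype α] [DecidableEq α]

theorem sup'_univ_apply {β : Type*} [SemilatticeSup β] (h : α → β) (a : α) :
    univ.sup' univ_nonempty (fun π : Perm α => h (π a)) = univ.sup' ⟨a, mem_univ a⟩ h := by
  simp_rw [← image_univ_of_surjective (surjective_eval a), sup'_image]
  rfl

theorem sum_apply_eq_sum_apply {M : Type*} [AddCommMonoid M] (h : α → M) (a b : α) :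
    ∑ π : Perm α, h (π a) = ∑ π : Perm α, h (π b) :=
  Fintype.sum_equiv (Equiv.mulRight (swap a b)) _ _ fun π => by simp

theorem card_nsmul_sum_apply {M : Type*} [AddCommMonoid M] (h : α → M) (a : α) :
    Fintype.card α • ∑ π : Perm α, h (π a) = (Fintype.card α).factorial • ∑ x, h x := by
  calc Fintype.card α • ∑ π : Perm α, h (π a)
      = ∑ b : α, ∑ π : Perm α, h (π b) := by
        rw [← card_univ, ← sum_const]
        exact sum_congr rfl fun b _ => sum_apply_eq_sum_apply h a b
    _ = ∑ π : Perm α, ∑ b, h (π b) := sum_comm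
    _ = ∑ _π : Perm α, ∑ x, h x := by simp only [Equiv.sum_comp]
    _ = (Fintype.card α).factorial • ∑ x, h x := by simp [Fintype.card_perm]

end Equiv.Perm

theorem permAct_single {n : ℕ} {A : Type*} [Zero A] (π : Perm (Fin n)) (k : Fin n) (a : A) :
    permAct π (Pi.single k a) = Pi.single (π k) a := by
  ext i
  simp [permAct, Pi.single_apply, Perm.inv_def, Equiv.eq_symm_apply, eq_comm]

theorem permAct_const {n : ℕ} {A : Type*} (π : Perm (Fin n)) (a : A) :
    permAct π (fun _ => a) = fun _ => a :=
  rfl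

theorem mevCost_const {n : ℕ} {A : Type*} (f : (Fin n → A) → ℝ) (a : A) :
    mevCost f (fun _ => a) = 0 := by
  have hfact : ((n.factorial : ℕ) : ℝ) ≠ 0 := by positivity
  simp [mevCost, permAct_const, Fintype.card_perm, hfact]

theorem mevCost_single {n : ℕ} {A : Type*} [Zero A] (f : (Fin n → A) → ℝ) (k : Fin n) (a : A) :
    mevCost f (Pi.single k a) =
      univ.sup' ⟨k, mem_univ k⟩ (fun j => f (Pi.single j a)) -
        (∑ j, f (Pi.single j a)) / n := by
  have hn : (n : ℝ) ≠ 0 := by exact_mod_cast k.pos.ne'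
  have hfact : ((n.factorial : ℕ) : ℝ) ≠ 0 := by positivity
  have hcount := Perm.card_nsmul_sum_apply (fun j => f (Pi.single j a)) k
  simp only [Fintype.card_fin, nsmul_eq_mul] at hcount
  simp only [mevCost, permAct_single, Perm.sup'_univ_apply (fun j => f (Pi.single j a)) k]
  congr 1
  rw [div_eq_div_iff hfact hn]
  linarith

theorem single_apply_sub_sum_filter_ne {ι R : Type*} [Fintype ι] [DecidableEq ι]
    [AddCommGroup R] (c : R) (k j : ι) :
    (Pi.single j c : ι → R) k - ∑ i ∈ univ.filter (· ≠ k), (Pi.single j c : ι → R) i =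
      if j = k then c else -c := by
  by_cases hjk : j = k
  · subst hjk
    simp
  · simp [hjk, Pi.single_apply, sum_ite_eq', Ne.symm hjk]

/-- Tightness of the smoothness bound: for `f(x) = x₀ - ∑_{i ≠ 0} xᵢ` and
`e` the indicator of the first coordinate, `C(f, e) = 2(1 - 1/n)` while `C(f, 0) = 0`. -/
theorem mevCost_tightness_example (n : ℕ) (hn : 0 < n) :
    mevCost
        (fun x : Fin n → ℝ =>
          x ⟨0, hn⟩ - ∑ i ∈ Finset.univ.filter (fun i : Fin n => i ≠ ⟨0, hn⟩), x i)
        (fun i : Fin n => if i = ⟨0, hn⟩ then (1 : ℝ) else 0) = 2 * (1 - 1 / (n : ℝ)) ∧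
      mevCost
        (fun x : Fin n → ℝ =>
          x ⟨0, hn⟩ - ∑ i ∈ Finset.univ.filter (fun i : Fin n => i ≠ ⟨0, hn⟩), x i)
        (fun _ : Fin n => (0 : ℝ)) = 0 := by
  refine ⟨?_, mevCost_const _ 0⟩
  set k : Fin n := ⟨0, hn⟩
  have hindicator : (fun i => if i = k then (1 : ℝ) else 0) = Pi.single k 1 :=
    funext fun i => (Pi.single_apply k 1 i).symm
  have hmax : univ.sup' ⟨k, mem_univ k⟩ (fun j => if j = k then (1 : ℝ) else -1) = 1 :=
    le_antisymm (sup'_le _ _ fun j _ => by split_ifs <;> norm_num)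
      (by simpa using le_sup' (fun j => if j = k then (1 : ℝ) else -1) (mem_univ k))
  have hsum : ∑ j, (if j = k then (1 : ℝ) else -1) = 2 - n := by
    simp [sum_ite, filter_eq', filter_ne', card_erase_of_mem, Nat.cast_pred hn]
    ring
  rw [hindicator, mevCost_single]
  simp only [single_apply_sub_sum_filter_ne, hmax, hsum]
  field_simp
  ring
end

section
/- Smoothness of the frontrunning payoff: let G : ℝ → ℝ be concave on [0, ∞), nondecreasing on [0, ∞), with G(0) = 0, and suppose G has (one-sided) derivative L at 0 within [0, ∞). Then for all t, t', δ ≥ 0, |(G(t + δ) − G(t)) − (G(t' + δ) − G(t'))| ≤ 2·L·|t − t'|. -/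
/-- Smoothness of the frontrunning payoff: if `G` is concave and nondecreasing on
`[0, ∞)` with `G 0 = 0` and one-sided derivative `L` at `0`, then the frontrunning
payoff `t ↦ G (t + δ) - G t` is `2L`-Lipschitz in `t` over nonnegative inputs. -/
theorem frontrunning_payoff_smooth (G : ℝ → ℝ) (L : ℝ)
    (hconc : ConcaveOn ℝ (Set.Ici 0) G)
    (hmono : MonotoneOn G (Set.Ici 0))
    (hG0 : G 0 = 0)
    (hderiv : HasDerivWithinAt G L (Set.Ici 0) 0) :
    ∀ t t' δ : ℝ, 0 ≤ t → 0 ≤ t' → 0 ≤ δ →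
      |(G (t + δ) - G t) - (G (t' + δ) - G t')| ≤ 2 * L * |t - t'| := by
  -- Step 1: for 0 < b, the secant slope G b / b is at most L.
  have hIoi : Set.Ici (0:ℝ) \ {0} = Set.Ioi 0 := by
    ext x; simp [Set.mem_diff, lt_iff_le_and_ne, and_comm, eq_comm]
  have hslope : ∀ b : ℝ, 0 < b → G b / b ≤ L := by
    intro b hb
    have htend : Filter.Tendsto (slope G 0) (nhdsWithin 0 (Set.Ioi 0)) (nhds L) := by
      have := hasDerivWithinAt_iff_tendsto_slope.mp hderiv
      rwa [hIoi] at this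
    refine ge_of_tendsto htend ?_
    have hev : ∀ᶠ y in nhdsWithin (0:ℝ) (Set.Ioi 0), y ∈ Set.Ioo 0 b := by
      have : Set.Ioo (0:ℝ) b ∈ nhdsWithin (0:ℝ) (Set.Ioi 0) :=
        Ioo_mem_nhdsGT_of_mem (by simp [hb.le, hb])
      exact this
    filter_upwards [hev] with y hy
    -- slope G 0 b ≤ slope G 0 y, via convexity of -G
    have hF : ConvexOn ℝ (Set.Ici 0) (-G) := hconc.neg
    have hm := hF.slope_mono (Set.self_mem_Ici) (x := 0)
      (Set.mem_diff_of_mem (Set.mem_Ici.2 hy.1.le) (by simpa using hy.1.ne'))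
      (Set.mem_diff_of_mem (Set.mem_Ici.2 hb.le) (by simpa using hb.ne'))
      hy.2.le
    simp only [slope_def_field, Pi.neg_apply, hG0, neg_zero, sub_zero] at hm ⊢
    rw [neg_div, neg_div, neg_le_neg_iff] at hm
    exact hm
  -- Step 2: for 0 ≤ a ≤ b, G b - G a ≤ L * (b - a).
  have key : ∀ a b : ℝ, 0 ≤ a → a ≤ b → G b - G a ≤ L * (b - a) := by
    intro a b ha hab
    rcases eq_or_lt_of_le hab with rfl | hab
    · simp
    rcases eq_or_lt_of_le ha with rfl | ha
    · have := hslope b hab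
      rw [div_le_iff₀ hab] at this
      simpa [hG0] using this
    · have h1 := hconc.slope_anti_adjacent (Set.self_mem_Ici)
        (Set.mem_Ici.2 (ha.le.trans hab.le)) ha hab
      have h2 := hslope a ha
      rw [hG0, sub_zero, sub_zero] at h1
      have h3 : (G b - G a) / (b - a) ≤ L := h1.trans h2
      rw [div_le_iff₀ (by linarith)] at h3
      linarith
  -- Step 3: Lipschitz bound on G itself.
  have lip : ∀ x y : ℝ, 0 ≤ x → 0 ≤ y → |G x - G y| ≤ L * |x - y| := by
    intro x y hx hy
    rcases le_total x y with h | h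
    · have h2 := hmono (Set.mem_Ici.2 hx) (Set.mem_Ici.2 hy) h
      rw [abs_sub_comm, abs_of_nonneg (sub_nonneg.2 h2), abs_sub_comm x y,
        abs_of_nonneg (sub_nonneg.2 h)]
      exact key x y hx h
    · have h2 := hmono (Set.mem_Ici.2 hy) (Set.mem_Ici.2 hx) h
      rw [abs_of_nonneg (sub_nonneg.2 h2), abs_of_nonneg (sub_nonneg.2 h)]
      exact key y x hy h
  intro t t' δ ht ht' hδ
  have h1 := lip (t + δ) (t' + δ) (by linarith) (by linarith)
  have h2 := lip t t' ht ht'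
  have he : t + δ - (t' + δ) = t - t' := by ring
  rw [he] at h1
  calc |(G (t + δ) - G t) - (G (t' + δ) - G t')|
      = |(G (t + δ) - G (t' + δ)) - (G t - G t')| := by ring_nf
    _ ≤ |G (t + δ) - G (t' + δ)| + |G t - G t'| := abs_sub _ _
    _ ≤ L * |t - t'| + L * |t - t'| := add_le_add h1 h2
    _ = 2 * L * |t - t'| := by ring
end

section
/- Sandwich profit is bounded by market volume: let G : ℝ → ℝ be strictly increasing with G(0) = 0, let t ≥ 0 (the total volume of the other traders), let y_i ≥ 0 (the sandwicher's buy) and y_j ∈ ℝ (the sandwicher's sell, a negative quantity denoting an amount received), and suppose the feasibility constraint G(t + y_i) − G(t + y_i + y_j) ≤ G(y_i) holds. Then −(y_i + y_j) ≤ t; that is, the sandwicher's profit f = −(y_i + y_j) is at most the total volume t. -/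
/-- Sandwich profit is bounded by market volume: if `G` is strictly increasing with
`G 0 = 0`, the other traders' volume is `t ≥ 0`, the sandwicher buys `y_i ≥ 0` and
sells `y_j` (negative denoting an amount received), and the feasibility constraint
`G (t + y_i) - G (t + y_i + y_j) ≤ G y_i` holds, then the sandwicher's profit
`-(y_i + y_j)` is at most `t`. -/
theorem sandwich_profit_le_volume (G : ℝ → ℝ) (hG : StrictMono G) (hG0 : G 0 = 0)
    (t yi yj : ℝ) (ht : 0 ≤ t) (hyi : 0 ≤ yi)
    (hfeas : G (t + yi) - G (t + yi + yj) ≤ G yi) :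
    -(yi + yj) ≤ t := by
  by_contra h
  push_neg at h
  have h1 : t + yi + yj < 0 := by linarith
  have h2 : G (t + yi + yj) < 0 := hG0 ▸ hG h1
  have h3 : G yi ≤ G (t + yi) := hG.le_iff_le.mpr (by linarith)
  linarith
end

section
/- The sign vector is a Laplacian eigenvector of the transposition graph with eigenvalue n(n−1): let n : ℕ, let G be the simple graph on vertex set Equiv.Perm (Fin n) where π and σ are adjacent iff σ * π⁻¹ is a transposition (IsSwap), and let v : Equiv.Perm (Fin n) → ℝ be v(π) = sign(π) ∈ {+1, −1}. Then L *ᵥ v = (n·(n−1)) • v, where L is the Laplacian matrix of G over ℝ. -/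
open Matrix

/-- The transposition graph on the symmetric group: `π` and `σ` are adjacent iff they
differ by (left multiplication by) a transposition, i.e. `σ * π⁻¹` is a swap. -/
def transpositionGraph (n : ℕ) : SimpleGraph (Equiv.Perm (Fin n)) where
  Adj π σ := (σ * π⁻¹).IsSwap
  symm := by
    constructor
    intro π σ h
    obtain ⟨i, j, hij, h⟩ := h
    exact ⟨i, j, hij, by rw [← Equiv.swap_inv, ← h, _root_.mul_inv_rev, inv_inv]⟩
  loopless := by
    constructor
    intro π h
    obtain ⟨i, j, hij, h⟩ := h
    rw [mul_inv_cancel] at h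
    exact hij (by simpa using congrArg (fun e : Equiv.Perm (Fin n) => e i) h)

lemma swap_eq_swap_iff' {α : Type*} [DecidableEq α] {a b c d : α} (hab : a ≠ b) :
    Equiv.swap a b = Equiv.swap c d ↔ (a = c ∧ b = d) ∨ (a = d ∧ b = c) := by
  constructor
  · intro h
    have hd : Equiv.swap a b c = d := by rw [h, Equiv.swap_apply_left]
    rcases eq_or_ne c a with rfl | hca
    · left
      refine ⟨rfl, ?_⟩
      rwa [Equiv.swap_apply_left] at hd
    rcases eq_or_ne c b with rfl | hcb
    · right
      rw [Equiv.swap_apply_right] at hd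
      exact ⟨hd, rfl⟩
    · rw [Equiv.swap_apply_of_ne_of_ne hca hcb] at hd
      subst hd
      exact absurd (by simpa [Equiv.swap_self] using congrArg (fun e => e a) h) hab.symm
  · rintro (⟨rfl, rfl⟩ | ⟨rfl, rfl⟩)
    · rfl
    · exact Equiv.swap_comm a b

open scoped Classical in
lemma card_swaps_mul_two (n : ℕ) :
    (Finset.univ.filter (Equiv.Perm.IsSwap (α := Fin n))).card * 2 = n * n - n := by
  set S := Finset.univ.filter (Equiv.Perm.IsSwap (α := Fin n)) with hS
  have key := Finset.card_eq_sum_card_fiberwise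
    (f := fun p : Fin n × Fin n => Equiv.swap p.1 p.2)
    (s := (Finset.univ : Finset (Fin n)).offDiag) (t := S)
    (by
      rintro ⟨i, j⟩ hp
      rw [Finset.mem_coe, Finset.mem_offDiag] at hp
      simp only [hS, Finset.mem_coe, Finset.mem_filter, Finset.mem_univ, true_and]
      exact ⟨i, j, hp.2.2, rfl⟩)
  have hfib : ∀ s ∈ S,
      ((Finset.univ : Finset (Fin n)).offDiag.filter
        (fun p => Equiv.swap p.1 p.2 = s)).card = 2 := by
    intro s hs
    rw [hS, Finset.mem_filter] at hs
    obtain ⟨a, b, hab, rfl⟩ := hs.2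
    have : ((Finset.univ : Finset (Fin n)).offDiag.filter
        (fun p => Equiv.swap p.1 p.2 = Equiv.swap a b)) = {(a, b), (b, a)} := by
      ext ⟨i, j⟩
      simp only [Finset.mem_filter, Finset.mem_offDiag, Finset.mem_univ, true_and,
        Finset.mem_insert, Finset.mem_singleton, Prod.mk.injEq]
      constructor
      · rintro ⟨hij, h⟩
        rcases (swap_eq_swap_iff' hij).mp h with ⟨rfl, rfl⟩ | ⟨rfl, rfl⟩
        · left; exact ⟨rfl, rfl⟩
        · right; exact ⟨rfl, rfl⟩
      · rintro (⟨rfl, rfl⟩ | ⟨rfl, rfl⟩)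
        · exact ⟨hab, rfl⟩
        · exact ⟨hab.symm, Equiv.swap_comm _ _⟩
    rw [this, Finset.card_insert_of_notMem (by simp [Prod.ext_iff, hab]),
      Finset.card_singleton]
  rw [Finset.sum_congr rfl hfib, Finset.sum_const, smul_eq_mul] at key
  rw [← key, Finset.offDiag_card]
  simp

open scoped Classical in
lemma degree_transpositionGraph (n : ℕ) (π : Equiv.Perm (Fin n)) :
    (transpositionGraph n).degree π * 2 = n * n - n := by
  rw [← card_swaps_mul_two n]
  congr 1
  rw [SimpleGraph.degree]
  have : (transpositionGraph n).neighborFinset π =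
      (Finset.univ.filter (Equiv.Perm.IsSwap (α := Fin n))).image (fun s => s * π) := by
    ext σ
    simp only [SimpleGraph.mem_neighborFinset, Finset.mem_image, Finset.mem_filter,
      Finset.mem_univ, true_and]
    constructor
    · intro h
      exact ⟨σ * π⁻¹, h, by group⟩
    · rintro ⟨s, hs, rfl⟩
      show ((s * π) * π⁻¹).IsSwap
      rwa [mul_inv_cancel_right]
  rw [this, Finset.card_image_of_injective _ (mul_left_injective π)]

open scoped Classical in
/-- The sign vector is a Laplacian eigenvector of the transposition graph with
eigenvalue `n(n-1)`. -/
theorem transpositionGraph_sign_eigenvector (n : ℕ) :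
    (transpositionGraph n).lapMatrix ℝ *ᵥ
        (fun π : Equiv.Perm (Fin n) => ((Equiv.Perm.sign π : ℤ) : ℝ)) =
      ((n : ℝ) * ((n : ℝ) - 1)) •
        (fun π : Equiv.Perm (Fin n) => ((Equiv.Perm.sign π : ℤ) : ℝ)) := by
  funext π
  rw [SimpleGraph.lapMatrix_mulVec_apply]
  have hsum : ∑ σ ∈ (transpositionGraph n).neighborFinset π,
      ((Equiv.Perm.sign σ : ℤ) : ℝ) =
      -(((transpositionGraph n).degree π : ℝ) * ((Equiv.Perm.sign π : ℤ) : ℝ)) := by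
    have h : ∀ σ ∈ (transpositionGraph n).neighborFinset π,
        ((Equiv.Perm.sign σ : ℤ) : ℝ) = -((Equiv.Perm.sign π : ℤ) : ℝ) := by
      intro σ hσ
      rw [SimpleGraph.mem_neighborFinset] at hσ
      have hsw : (σ * π⁻¹).IsSwap := hσ
      have h1 : Equiv.Perm.sign (σ * π⁻¹) = -1 := hsw.sign_eq
      have h2 : σ = (σ * π⁻¹) * π := by group
      rw [h2, Equiv.Perm.sign_mul, h1]
      push_cast
      ring
    rw [Finset.sum_congr rfl h, Finset.sum_const, SimpleGraph.degree]
    simp [mul_comm]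
  rw [hsum]
  have hd := degree_transpositionGraph n π
  have hle : n ≤ n * n := by nlinarith
  have hcast : ((transpositionGraph n).degree π : ℝ) * 2 = (n : ℝ) * n - n := by
    have h1 := congrArg (fun k : ℕ => (k : ℝ)) hd
    push_cast [Nat.cast_sub hle] at h1
    linarith
  simp only [Pi.smul_apply, smul_eq_mul]
  linear_combination ((Equiv.Perm.sign π : ℤ) : ℝ) * hcast
end

section
/- Spectral-gap upper bound on the cost of MEV over a graph: let V be a finite nonempty type with N = |V|, let Q : (V → ℝ) → ℝ be the Laplacian quadratic form of a simple graph G on V, Q(v) = ∑ over edges {i,j} of G of (v i − v j)², and let c > 0 satisfy c·(∑ i, (v i)²) ≤ Q(v) for every v : V → ℝ with ∑ i, v i = 0. Then for every f : V → ℝ, C(f) := (max over i of f i) − (∑ i, f i)/N satisfies C(f) ≤ √(Q(f)/c). -/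
/-! Subtracting the mean `μ` of `f` leaves the Laplacian form unchanged and produces a mean-zero
vector, so the gap hypothesis gives `c · ∑ (f i - μ)² ≤ Q(f)`. The cost `max f - μ` is one
coordinate of `f - μ`, hence at most its Euclidean norm `√(∑ (f i - μ)²) ≤ √(Q(f)/c)`. -/

/-- The Laplacian quadratic form of a simple graph: `Q(f) = ∑_{{i,j} ∈ E} (f i - f j)²`. -/
def lapQuadForm {V : Type*} [Fintype V] [DecidableEq V] (G : SimpleGraph V)
    [DecidableRel G.Adj] (f : V → ℝ) : ℝ :=
  ∑ e ∈ G.edgeFinset, Sym2.lift ⟨fun i j => (f i - f j) ^ 2, fun a b => by ring⟩ e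

lemma lapQuadForm_sub_const {V : Type*} [Fintype V] [DecidableEq V] (G : SimpleGraph V)
    [DecidableRel G.Adj] (f : V → ℝ) (μ : ℝ) :
    lapQuadForm G (fun i => f i - μ) = lapQuadForm G f := by
  refine Finset.sum_congr rfl fun e _ => ?_
  induction e using Sym2.ind with
  | _ a b => simp only [Sym2.lift_mk]; ring

lemma sum_sub_mean_eq_zero {ι K : Type*} [Fintype ι] [Nonempty ι] [Field K] [CharZero K]
    (f : ι → K) : ∑ i, (f i - (∑ j, f j) / Fintype.card ι) = 0 := by
  have hcard : (Fintype.card ι : K) ≠ 0 := Nat.cast_ne_zero.2 Fintype.card_ne_zero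
  rw [Finset.sum_sub_distrib, Finset.sum_const, Finset.card_univ, nsmul_eq_mul,
    mul_div_cancel₀ _ hcard, sub_self]

lemma le_sqrt_sum_sq {ι : Type*} [Fintype ι] (x : ι → ℝ) (i : ι) :
    x i ≤ √(∑ j, x j ^ 2) :=
  (le_abs_self _).trans <| Real.abs_le_sqrt <|
    Finset.single_le_sum (fun j _ => sq_nonneg (x j)) (Finset.mem_univ i)

/-- Spectral-gap upper bound on the cost of MEV over a graph: if `c > 0` is a lower
bound on the Laplacian quadratic form over mean-zero vectors (i.e. `c ≤ λ₂`), then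
`C(f) = max f - mean f ≤ √(Q(f)/c)`. -/
theorem mevCost_le_sqrt_quadForm_div_gap {V : Type*} [Fintype V] [DecidableEq V]
    [Nonempty V] (G : SimpleGraph V) [DecidableRel G.Adj] (c : ℝ) (hc : 0 < c)
    (hgap : ∀ v : V → ℝ, ∑ i, v i = 0 → c * ∑ i, (v i) ^ 2 ≤ lapQuadForm G v)
    (f : V → ℝ) :
    (Finset.univ.sup' Finset.univ_nonempty f) - (∑ i, f i) / (Fintype.card V : ℝ) ≤
      Real.sqrt (lapQuadForm G f / c) := by
  set μ := (∑ i, f i) / (Fintype.card V : ℝ)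
  have hvar : c * ∑ i, (f i - μ) ^ 2 ≤ lapQuadForm G f := by
    simpa only [lapQuadForm_sub_const] using hgap (fun i => f i - μ) (sum_sub_mean_eq_zero f)
  obtain ⟨i₀, -, hi₀⟩ := Finset.exists_mem_eq_sup' Finset.univ_nonempty f
  calc _ = f i₀ - μ := by rw [hi₀]
    _ ≤ √(∑ i, (f i - μ) ^ 2) := le_sqrt_sum_sq (fun i => f i - μ) i₀
    _ ≤ √(lapQuadForm G f / c) := Real.sqrt_le_sqrt ((le_div_iff₀' hc).2 hvar)
end
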